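/- arXiv:1208.5275 — 5 statements merged into one kernel-verified Lean document; each statement's English description precedes it below -/
import Mathlib

section
/- Let ν ≥ 0 and λ > 0 be real numbers and define u(r,θ) = J_ν(√λ·r)·sin(ν·θ) for r > 0 and θ ∈ ℝ. Then u satisfies the polar-coordinate Helmholtz equation: for all r > 0 and all θ ∈ ℝ, ∂²u/∂r²(r,θ) + (1/r)·∂u/∂r(r,θ) + (1/r²)·∂²u/∂θ²(r,θ) + λ·u(r,θ) = 0, where ∂/∂r and ∂/∂θ denote derivatives of the one-variable functions r ↦ u(r,θ) and θ ↦ u(r,θ) respectively (and these functions are twice differentiable). -/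
open Real

/-- Bessel function of the first kind of real order `ν`, defined by its series. -/
noncomputable def besselJ (ν : ℝ) (x : ℝ) : ℝ :=
  ∑' s : ℕ, ((-1 : ℝ) ^ s) * (x / 2) ^ (ν + 2 * (s : ℝ)) /
    ((s.factorial : ℝ) * Real.Gamma (ν + (s : ℝ) + 1))

/-!
For `x > 0` the series gives `J_ν(x) = (x/2)^ν G(x²/4)`, where `G(t) = ∑ b_s t^s` with
`b_s = (-1)^s / (s! Γ(ν+s+1))` is entire. The recurrence `(s+1)(ν+s+1) b_{s+1} = -b_s`, coming
from `Γ(z+1) = z Γ(z)`, says exactly that `t G'' + (ν+1) G' + G = 0`, and the substitution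
`x ↦ (x/2)^ν G(x²/4)` turns this equation into Bessel's equation
`x² J'' + x J' + (x² - ν²) J = 0`. Since `∂²_θ sin(νθ) = -ν² sin(νθ)`, the polar Helmholtz
expression at `(r, θ)` is `sin(νθ)/r²` times Bessel's equation at `x = √λ r`.
-/

open Filter Topology

noncomputable def powSeries (a : ℕ → ℝ) (t : ℝ) : ℝ := ∑' s : ℕ, a s * t ^ s

noncomputable def derivCoeff (a : ℕ → ℝ) (s : ℕ) : ℝ := (s + 1) * a (s + 1)

section FactorialBound

variable {a : ℕ → ℝ} {C : ℝ}

lemma abs_le_abs_zero_div_factorial (h : ∀ s : ℕ, (s + 1) * |a (s + 1)| ≤ |a s|) (s : ℕ) :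
    |a s| ≤ |a 0| / s.factorial := by
  induction s with
  | zero => simp
  | succ n ih =>
    rw [Nat.factorial_succ, Nat.cast_mul, mul_comm, ← div_div, le_div_iff₀ (by positivity)]
    push_cast
    linarith [h n]

lemma abs_derivCoeff_le (hC : ∀ s, |a s| ≤ C / s.factorial) (s : ℕ) :
    |derivCoeff a s| ≤ C / s.factorial := by
  have hs : (0 : ℝ) < s + 1 := by positivity
  calc |derivCoeff a s| = (s + 1) * |a (s + 1)| := by
        rw [derivCoeff, abs_mul, abs_of_pos hs]
    _ ≤ (s + 1) * (C / (s + 1).factorial) := by gcongr; exact hC _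
    _ = C / s.factorial := by
        rw [Nat.factorial_succ]; push_cast; field_simp

lemma summable_powSeries (hC : ∀ s, |a s| ≤ C / s.factorial) (t : ℝ) :
    Summable fun s => a s * t ^ s := by
  refine .of_norm_bounded ((summable_pow_div_factorial |t|).mul_left C) fun s => ?_
  rw [norm_mul, norm_pow, norm_eq_abs, norm_eq_abs, mul_div_assoc', ← div_mul_eq_mul_div]
  gcongr
  exact hC s

lemma hasDerivAt_powSeries (hC : ∀ s, |a s| ≤ C / s.factorial) (t : ℝ) :
    HasDerivAt (powSeries a) (powSeries (derivCoeff a) t) t := by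
  have hC0 : 0 ≤ C := (abs_nonneg _).trans (by simpa using hC 0)
  set R := |t| + 1
  have ht : t ∈ Metric.ball (0 : ℝ) R := by simp [R]
  -- for `s ≥ 1` the derivative of the `s`-th term is `derivCoeff a (s - 1) * y ^ (s - 1)`,
  -- for `s = 0` it vanishes
  have hbound : ∀ s, ∀ y ∈ Metric.ball (0 : ℝ) R,
      ‖a s * (s * y ^ (s - 1))‖ ≤ C * R ^ (s - 1) / (s - 1).factorial := by
    rintro (_ | k) y hy
    · simpa using div_nonneg hC0 zero_le_one
    have hy : |y| ≤ R := by simpa using (Metric.mem_ball.1 hy).le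
    calc ‖a (k + 1) * ((k + 1 : ℕ) * y ^ (k + 1 - 1))‖ = |derivCoeff a k| * |y| ^ k := by
          simp only [Nat.cast_add, Nat.cast_one, add_tsub_cancel_right, norm_mul, norm_eq_abs,
            norm_pow, derivCoeff, abs_mul]
          ring
      _ ≤ C / k.factorial * R ^ k := by gcongr; exact abs_derivCoeff_le hC k
      _ = _ := by simp [div_mul_eq_mul_div]
  have hu : Summable fun s => C * R ^ (s - 1) / (s - 1).factorial :=
    (summable_nat_add_iff 1).1 <| by
      simpa [mul_div_assoc] using (summable_pow_div_factorial R).mul_left C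
  have hderiv := hasDerivAt_tsum_of_isPreconnected hu Metric.isOpen_ball
    (convex_ball (0 : ℝ) R).isPreconnected (fun s y _ => (hasDerivAt_pow s y).const_mul (a s))
    hbound ht (summable_powSeries hC t) ht
  have hshift : HasSum (fun s : ℕ => a s * (s * t ^ (s - 1))) (powSeries (derivCoeff a) t) := by
    have h := (hasSum_nat_add_iff (f := fun s : ℕ => a s * (s * t ^ (s - 1)))
      (g := powSeries (derivCoeff a) t) 1).1
    simp only [Finset.range_one, Finset.sum_singleton, CharP.cast_eq_zero, zero_mul, mul_zero,
      add_zero] at h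
    refine h ?_
    simpa [powSeries, derivCoeff, mul_left_comm, mul_assoc] using
      (summable_powSeries (abs_derivCoeff_le hC) t).hasSum
  exact hshift.tsum_eq ▸ hderiv

lemma differentiable_powSeries (hC : ∀ s, |a s| ≤ C / s.factorial) :
    Differentiable ℝ (powSeries a) :=
  fun t => (hasDerivAt_powSeries hC t).differentiableAt

lemma deriv_powSeries (hC : ∀ s, |a s| ≤ C / s.factorial) :
    deriv (powSeries a) = powSeries (derivCoeff a) :=
  funext fun t => (hasDerivAt_powSeries hC t).deriv

lemma powSeries_ode {ν : ℝ}
    (hrec : ∀ s : ℕ, (s + 1) * (ν + s + 1) * a (s + 1) = -a s)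
    (hC : ∀ s, |a s| ≤ C / s.factorial) (t : ℝ) :
    t * powSeries (derivCoeff (derivCoeff a)) t + (ν + 1) * powSeries (derivCoeff a) t
      + powSeries a t = 0 := by
  have hC' := abs_derivCoeff_le hC
  have h0 := (summable_powSeries hC t).hasSum
  have h1 := (summable_powSeries hC' t).hasSum
  have h2 : HasSum (fun s : ℕ => s * derivCoeff a s * t ^ s)
      (t * powSeries (derivCoeff (derivCoeff a)) t) := by
    have h := (summable_powSeries (abs_derivCoeff_le hC') t).hasSum.mul_left t
    have e : (fun s : ℕ => t * (derivCoeff (derivCoeff a) s * t ^ s))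
        = fun s : ℕ => ((s + 1 : ℕ) : ℝ) * derivCoeff a (s + 1) * t ^ (s + 1) := by
      funext s
      simp only [derivCoeff]
      push_cast
      ring
    rw [e] at h
    exact (hasSum_nat_add_iff' 1).1 (by simpa [powSeries] using h)
  refine ((h2.add (h1.mul_left (ν + 1))).add h0).unique ?_
  convert hasSum_zero with s
  unfold derivCoeff
  linear_combination t ^ s * hrec s

end FactorialBound

noncomputable def besselCoeff (ν : ℝ) (s : ℕ) : ℝ :=
  (-1) ^ s / (s.factorial * Gamma (ν + s + 1))

lemma besselCoeff_succ (ν : ℝ) (s : ℕ) :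
    (s + 1) * (ν + s + 1) * besselCoeff ν (s + 1) = -besselCoeff ν s := by
  rcases eq_or_ne (ν + s + 1) 0 with h | h
  · -- both sides vanish, the right one because `Gamma 0 = 0`
    simp [besselCoeff, h]
  have hG : Gamma (ν + (s + 1 : ℕ) + 1) = (ν + s + 1) * Gamma (ν + s + 1) := by
    rw [← Gamma_add_one h]; push_cast; ring_nf
  have hs : (s + 1 : ℝ) * (ν + s + 1) ≠ 0 := mul_ne_zero (by positivity) h
  have hdiv : besselCoeff ν (s + 1) = -besselCoeff ν s / ((s + 1) * (ν + s + 1)) := by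
    rw [besselCoeff, besselCoeff, hG, Nat.factorial_succ]
    push_cast
    simp only [div_eq_mul_inv, mul_inv]
    ring
  rw [hdiv, mul_div_cancel₀ _ hs]

lemma abs_besselCoeff_le {ν : ℝ} (hν : 0 ≤ ν) (s : ℕ) :
    |besselCoeff ν s| ≤ |besselCoeff ν 0| / s.factorial := by
  refine abs_le_abs_zero_div_factorial (fun s => ?_) s
  have hs : (s + 1 : ℝ) ≤ (s + 1) * (ν + s + 1) := by nlinarith
  rw [← abs_neg (besselCoeff ν s), ← besselCoeff_succ, abs_mul,
    abs_of_pos ((by positivity : (0 : ℝ) < s + 1).trans_le hs)]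
  exact mul_le_mul_of_nonneg_right hs (abs_nonneg _)

lemma besselJ_eq_half_rpow_mul_powSeries (ν : ℝ) {x : ℝ} (hx : 0 < x) :
    besselJ ν x = (x / 2) ^ ν * powSeries (besselCoeff ν) (x ^ 2 / 4) := by
  rw [besselJ, powSeries, ← tsum_mul_left]
  congr 1 with s
  have hpow : (x / 2) ^ (ν + 2 * (s : ℝ)) = (x / 2) ^ ν * (x ^ 2 / 4) ^ s := by
    rw [rpow_add (by positivity), rpow_mul_natCast (by positivity), rpow_two]
    ring
  rw [hpow, besselCoeff]
  ring

lemma hasDerivAt_half_rpow_mul {ν x h' : ℝ} {h : ℝ → ℝ} (hh : HasDerivAt h h' x) (hx : 0 < x) :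
    HasDerivAt (fun y => (y / 2) ^ ν * h y) ((x / 2) ^ ν * (ν / x * h x + h')) x := by
  have hpow : HasDerivAt (fun y => (y / 2) ^ ν) (ν * (x / 2) ^ (ν - 1) * (1 / 2)) x :=
    (hasDerivAt_rpow_const (Or.inl (by positivity))).comp x ((hasDerivAt_id x).div_const 2)
  refine (hpow.mul hh).congr_deriv ?_
  rw [rpow_sub_one (by positivity)]
  field_simp

lemma hasDerivAt_comp_sq_div_four {K : ℝ → ℝ} {x : ℝ} (hK : DifferentiableAt ℝ K (x ^ 2 / 4)) :
    HasDerivAt (fun y => K (y ^ 2 / 4)) (x / 2 * deriv K (x ^ 2 / 4)) x := by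
  refine (hK.hasDerivAt.comp x ((hasDerivAt_pow 2 x).div_const 4)).congr_deriv ?_
  push_cast
  ring

def SolvesBesselEquationAt (ν : ℝ) (f : ℝ → ℝ) (x : ℝ) : Prop :=
  DifferentiableAt ℝ f x ∧ DifferentiableAt ℝ (deriv f) x ∧
    x ^ 2 * deriv (deriv f) x + x * deriv f x + (x ^ 2 - ν ^ 2) * f x = 0

section HalfRpowMulCompSq

variable {ν : ℝ} {f G : ℝ → ℝ}

lemma hasDerivAt_of_eqOn_half_rpow_mul_comp_sq
    (hf : Set.EqOn f (fun y => (y / 2) ^ ν * G (y ^ 2 / 4)) (Set.Ioi 0))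
    (hG : Differentiable ℝ G) {x : ℝ} (hx : 0 < x) :
    HasDerivAt f ((x / 2) ^ ν * (ν / x * G (x ^ 2 / 4) + x / 2 * deriv G (x ^ 2 / 4))) x :=
  (hasDerivAt_half_rpow_mul (hasDerivAt_comp_sq_div_four (hG _)) hx).congr_of_eventuallyEq
    (hf.eventuallyEq_of_mem (Ioi_mem_nhds hx))

lemma solvesBesselEquationAt_of_eqOn_half_rpow_mul_comp_sq
    (hf : Set.EqOn f (fun y => (y / 2) ^ ν * G (y ^ 2 / 4)) (Set.Ioi 0))
    (hG : Differentiable ℝ G) (hG' : Differentiable ℝ (deriv G))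
    (hode : ∀ t, t * deriv (deriv G) t + (ν + 1) * deriv G t + G t = 0) {x : ℝ} (hx : 0 < x) :
    SolvesBesselEquationAt ν f x := by
  have hf' := hasDerivAt_of_eqOn_half_rpow_mul_comp_sq hf hG hx
  have hderiv : deriv f =ᶠ[𝓝 x]
      fun y => (y / 2) ^ ν * (ν / y * G (y ^ 2 / 4) + y / 2 * deriv G (y ^ 2 / 4)) := by
    filter_upwards [Ioi_mem_nhds hx] with y hy
    exact (hasDerivAt_of_eqOn_half_rpow_mul_comp_sq hf hG hy).deriv
  have hinner : HasDerivAt (fun y => ν / y * G (y ^ 2 / 4) + y / 2 * deriv G (y ^ 2 / 4))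
      (-ν / x ^ 2 * G (x ^ 2 / 4) + ν / x * (x / 2 * deriv G (x ^ 2 / 4))
        + (1 / 2 * deriv G (x ^ 2 / 4) + x / 2 * (x / 2 * deriv (deriv G) (x ^ 2 / 4)))) x := by
    have hinv : HasDerivAt (fun y => ν / y) (-ν / x ^ 2) x := by
      simpa [div_eq_mul_inv, neg_div] using (hasDerivAt_inv hx.ne').const_mul ν
    exact (hinv.mul (hasDerivAt_comp_sq_div_four (hG _))).add
      (((hasDerivAt_id x).div_const 2).mul (hasDerivAt_comp_sq_div_four (hG' _)))
  have hf'' := (hasDerivAt_half_rpow_mul hinner hx).congr_of_eventuallyEq hderiv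
  refine ⟨hf'.differentiableAt, hf''.differentiableAt, ?_⟩
  rw [hf''.deriv, hf'.deriv, hf hx]
  field_simp
  linear_combination 4 * x ^ 2 * (x / 2) ^ ν * hode (x ^ 2 / 4)

end HalfRpowMulCompSq

lemma besselJ_solvesBesselEquationAt {ν : ℝ} (hν : 0 ≤ ν) {x : ℝ} (hx : 0 < x) :
    SolvesBesselEquationAt ν (besselJ ν) x := by
  have hC := abs_besselCoeff_le hν
  refine solvesBesselEquationAt_of_eqOn_half_rpow_mul_comp_sq
    (fun y hy => besselJ_eq_half_rpow_mul_powSeries ν hy) (differentiable_powSeries hC) ?_ ?_ hx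
  · rw [deriv_powSeries hC]
    exact differentiable_powSeries (abs_derivCoeff_le hC)
  · intro t
    rw [deriv_powSeries hC, deriv_powSeries (abs_derivCoeff_le hC)]
    exact powSeries_ode (besselCoeff_succ ν) hC t

lemma deriv_const_mul_comp_mul_left (c a : ℝ) (f : ℝ → ℝ) :
    deriv (fun s => c * f (a * s)) = fun s => c * a * deriv f (a * s) := by
  ext s
  simp only [deriv_const_mul_field', deriv_comp_mul_left, smul_eq_mul, mul_assoc]

lemma DifferentiableAt.const_mul_comp_mul_left {f : ℝ → ℝ} {a x : ℝ}
    (hf : DifferentiableAt ℝ f (a * x)) (c : ℝ) :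
    DifferentiableAt ℝ (fun s => c * f (a * s)) x :=
  (hf.comp x (differentiableAt_id.const_mul a)).const_mul c

/-- `u(r,θ) = J_ν(√λ r) sin(νθ)` satisfies the polar-coordinate Helmholtz equation
`u_rr + (1/r) u_r + (1/r²) u_θθ + λ u = 0` for all `r > 0`, `θ ∈ ℝ`. -/
theorem besselJ_eigenfunction_polar (ν lam : ℝ) (hν : 0 ≤ ν) (hlam : 0 < lam)
    (u : ℝ → ℝ → ℝ)
    (hu : ∀ r θ : ℝ, u r θ = besselJ ν (Real.sqrt lam * r) * Real.sin (ν * θ)) :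
    ∀ r : ℝ, 0 < r → ∀ θ : ℝ,
      DifferentiableAt ℝ (fun s => u s θ) r ∧
      DifferentiableAt ℝ (deriv (fun s => u s θ)) r ∧
      DifferentiableAt ℝ (fun t => u r t) θ ∧
      DifferentiableAt ℝ (deriv (fun t => u r t)) θ ∧
      deriv (deriv (fun s => u s θ)) r + (1 / r) * deriv (fun s => u s θ) r
        + (1 / r ^ 2) * deriv (deriv (fun t => u r t)) θ + lam * u r θ = 0 := by
  intro r hr θ
  obtain ⟨hJ, hJ', hode⟩ :=
    besselJ_solvesBesselEquationAt hν (mul_pos (sqrt_pos.2 hlam) hr)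
  have radial : (fun s => u s θ) = fun s => sin (ν * θ) * besselJ ν (√lam * s) :=
    funext fun s => (hu s θ).trans (mul_comm _ _)
  have angular : (fun t => u r t) = fun t => besselJ ν (√lam * r) * sin (ν * t) :=
    funext (hu r)
  simp only [radial, angular, deriv_const_mul_comp_mul_left, Real.deriv_sin, deriv_cos']
  refine ⟨hJ.const_mul_comp_mul_left _, hJ'.const_mul_comp_mul_left _,
    differentiableAt_sin.const_mul_comp_mul_left _,
    differentiableAt_cos.const_mul_comp_mul_left _, ?_⟩
  have hsq : √lam ^ 2 = lam := sq_sqrt hlam.le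
  field_simp
  linear_combination sin (ν * θ) * hode - r ^ 2 * besselJ ν (√lam * r) * sin (ν * θ) * hsq
end

section
/- Let α ∈ (0, 2π) and ν = π/α. Let Z = {x > 0 : J_ν(x) = 0} and W = {x > 0 : J_{2ν}(x) = 0}. Assume Z is nonempty, j₁ := inf Z satisfies j₁ > 0 and j₁ ∈ Z, the set Z ∩ (j₁, ∞) is nonempty with j₂ := inf(Z ∩ (j₁, ∞)) ∈ Z, and W is nonempty with i₁ := inf W satisfying i₁ > 0 and i₁ ∈ W. Then: (a) {(r,θ) : 0 < r < 1, 0 < θ < α, J_ν(j₂·r)·sin(ν·θ) = 0} = {(r,θ) : r = j₁/j₂, 0 < θ < α}; (b) {(r,θ) : 0 < r < 1, 0 < θ < α, J_{2ν}(i₁·r)·sin(2ν·θ) = 0} = {(r,θ) : 0 < r < 1, θ = α/2}. In other words, the nodal set of the eigenfunction J_ν(j₂ r) sin(νθ) inside the open sector of angle α and radius 1 is the circular arc r = j₁/j₂, while the nodal set of the eigenfunction J_{2ν}(i₁ r) sin(2νθ) is the radial line θ = α/2. -/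
open Real

private lemma fact_gamma_le {ν : ℝ} (hν : 0 < ν) : ∀ s : ℕ,
    (s.factorial : ℝ) * Real.Gamma (ν + 1) ≤ Real.Gamma (ν + (s : ℝ) + 1)
  | 0 => by simp
  | (n+1) => by
    have h1 : (0:ℝ) < ν + n + 1 := by positivity
    have h2 : ν + ((n+1 : ℕ) : ℝ) + 1 = (ν + (n:ℝ) + 1) + 1 := by push_cast; ring
    rw [h2, Real.Gamma_add_one h1.ne']
    have ih := fact_gamma_le hν n
    have hΓ : 0 < Real.Gamma (ν + 1) := Real.Gamma_pos_of_pos (by linarith)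
    calc ((n+1).factorial : ℝ) * Real.Gamma (ν+1)
        = ((n:ℝ)+1) * ((n.factorial : ℝ) * Real.Gamma (ν+1)) := by
          push_cast [Nat.factorial_succ]; ring
      _ ≤ ((n:ℝ)+1) * Real.Gamma (ν + (n:ℝ) + 1) :=
          mul_le_mul_of_nonneg_left ih (by positivity)
      _ ≤ (ν + (n:ℝ) + 1) * Real.Gamma (ν + (n:ℝ) + 1) :=
          mul_le_mul_of_nonneg_right (by linarith) (Real.Gamma_pos_of_pos h1).le

private lemma besselJ_eq {ν x : ℝ} (hx : 0 < x) :
    besselJ ν x = (x / 2) ^ ν * FormalMultilinearSeries.ofScalarsSum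
      (fun s : ℕ => ((-1 : ℝ) ^ s) / ((s.factorial : ℝ) * Real.Gamma (ν + (s : ℝ) + 1)))
      ((x / 2) ^ 2) := by
  have hh : (0:ℝ) < x / 2 := by linarith
  rw [FormalMultilinearSeries.ofScalars_sum_eq, ← tsum_mul_left]
  unfold besselJ
  refine tsum_congr fun s => ?_
  have h1 : (x / 2) ^ (ν + 2 * (s:ℝ)) = (x/2) ^ ν * ((x/2)^2)^s := by
    rw [Real.rpow_add hh]
    congr 1
    have h2 : (2:ℝ) * (s:ℝ) = ((2*s : ℕ) : ℝ) := by push_cast; ring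
    rw [h2, Real.rpow_natCast, pow_mul]
  rw [h1]
  simp only [smul_eq_mul]
  ring

private lemma radius_top {ν : ℝ} (hν : 0 < ν) :
    (FormalMultilinearSeries.ofScalars ℝ
      (fun s : ℕ => ((-1:ℝ)^s) / ((s.factorial : ℝ) * Real.Gamma (ν + (s:ℝ) + 1)))).radius
      = ⊤ := by
  apply FormalMultilinearSeries.radius_eq_top_of_summable_norm
  intro r
  have hΓ : 0 < Real.Gamma (ν + 1) := Real.Gamma_pos_of_pos (by linarith)
  refine Summable.of_nonneg_of_le (fun n => by positivity) (fun n => ?_)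
    ((Real.summable_pow_div_factorial (r:ℝ)).mul_left (1 / Real.Gamma (ν+1)))
  rw [FormalMultilinearSeries.ofScalars_norm]
  have h1 : 0 < Real.Gamma (ν + (n:ℝ) + 1) := Real.Gamma_pos_of_pos (by positivity)
  have hfac : (0:ℝ) < (n.factorial : ℝ) := by positivity
  have hfac1 : (1:ℝ) ≤ (n.factorial : ℝ) := by exact_mod_cast n.factorial_pos
  have hΓle : Real.Gamma (ν+1) ≤ Real.Gamma (ν + (n:ℝ) + 1) := by
    have := fact_gamma_le hν n
    nlinarith
  have hnorm : ‖((-1:ℝ)^n) / ((n.factorial : ℝ) * Real.Gamma (ν + (n:ℝ) + 1))‖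
      = 1 / ((n.factorial : ℝ) * Real.Gamma (ν + (n:ℝ) + 1)) := by
    rw [norm_div, norm_pow, norm_neg, norm_one, one_pow, Real.norm_eq_abs,
      abs_of_pos (by positivity)]
  rw [hnorm]
  calc 1 / ((n.factorial : ℝ) * Real.Gamma (ν + (n:ℝ) + 1)) * (r:ℝ)^n
      = (r:ℝ)^n / ((n.factorial:ℝ) * Real.Gamma (ν + (n:ℝ) + 1)) := by ring
    _ ≤ (r:ℝ)^n / ((n.factorial:ℝ) * Real.Gamma (ν+1)) := by
        gcongr
    _ = 1 / Real.Gamma (ν+1) * ((r:ℝ)^n / (n.factorial:ℝ)) := by ring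


private lemma analyticOnNhd_g {ν : ℝ} (hν : 0 < ν) :
    AnalyticOnNhd ℝ (FormalMultilinearSeries.ofScalarsSum (E := ℝ)
      (fun s : ℕ => ((-1:ℝ)^s) / ((s.factorial : ℝ) * Real.Gamma (ν + (s:ℝ) + 1))))
      Set.univ := by
  have h := (FormalMultilinearSeries.ofScalars ℝ
      (fun s : ℕ => ((-1:ℝ)^s) / ((s.factorial : ℝ) * Real.Gamma (ν + (s:ℝ) + 1)))
      ).hasFPowerSeriesOnBall (by rw [radius_top hν]; exact ENNReal.zero_lt_top)
  rw [radius_top hν] at h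
  intro y _
  exact h.analyticAt_of_mem (by simp [edist_lt_top])

open scoped Topology

/-- Nodal sets of the two candidate second eigenfunctions of the Dirichlet Laplacian
on the sector of angle `α` and radius `1`: the nodal set of `J_ν(j₂ r) sin(νθ)` is
the arc `r = j₁/j₂`, and the nodal set of `J_{2ν}(i₁ r) sin(2νθ)` is the line `θ = α/2`. -/
theorem nodal_sets_sector (α : ℝ) (hα : α ∈ Set.Ioo (0 : ℝ) (2 * π))
    (ν : ℝ) (hν : ν = π / α)
    (Z W : Set ℝ)
    (hZ : Z = {x : ℝ | 0 < x ∧ besselJ ν x = 0})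
    (hW : W = {x : ℝ | 0 < x ∧ besselJ (2 * ν) x = 0})
    (hZne : Z.Nonempty)
    (j₁ : ℝ) (hj₁def : j₁ = sInf Z) (hj₁pos : 0 < j₁) (hj₁mem : j₁ ∈ Z)
    (hZ2ne : (Z ∩ Set.Ioi j₁).Nonempty)
    (j₂ : ℝ) (hj₂def : j₂ = sInf (Z ∩ Set.Ioi j₁)) (hj₂mem : j₂ ∈ Z)
    (hWne : W.Nonempty)
    (i₁ : ℝ) (hi₁def : i₁ = sInf W) (hi₁pos : 0 < i₁) (hi₁mem : i₁ ∈ W) :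
    ({p : ℝ × ℝ | 0 < p.1 ∧ p.1 < 1 ∧ 0 < p.2 ∧ p.2 < α ∧
        besselJ ν (j₂ * p.1) * Real.sin (ν * p.2) = 0}
      = {p : ℝ × ℝ | p.1 = j₁ / j₂ ∧ 0 < p.2 ∧ p.2 < α}) ∧
    ({p : ℝ × ℝ | 0 < p.1 ∧ p.1 < 1 ∧ 0 < p.2 ∧ p.2 < α ∧
        besselJ (2 * ν) (i₁ * p.1) * Real.sin (2 * ν * p.2) = 0}
      = {p : ℝ × ℝ | 0 < p.1 ∧ p.1 < 1 ∧ p.2 = α / 2}) := by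
  obtain ⟨hα0, hα2π⟩ := hα
  have hνpos : 0 < ν := hν ▸ div_pos pi_pos hα0
  have hνα : ν * α = π := by rw [hν]; field_simp
  -- zeros of besselJ ν give zeros of the analytic function g
  have hZg : ∀ x ∈ Z, FormalMultilinearSeries.ofScalarsSum (E := ℝ)
      (fun s : ℕ => ((-1:ℝ)^s) / ((s.factorial : ℝ) * Real.Gamma (ν + (s:ℝ) + 1)))
      ((x/2)^2) = 0 := by
    intro x hx
    rw [hZ] at hx
    obtain ⟨hx0, hxb⟩ := hx
    rw [besselJ_eq hx0] at hxb
    rcases mul_eq_zero.1 hxb with h | h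
    · exact absurd h (Real.rpow_pos_of_pos (by linarith) ν).ne'
    · exact h
  have hj₂Zpos : 0 < j₂ := (hZ ▸ hj₂mem).1
  have hBdd : BddBelow Z := ⟨0, fun y hy => (hZ ▸ hy).1.le⟩
  have hBdd2 : BddBelow (Z ∩ Set.Ioi j₁) := ⟨j₁, fun y hy => le_of_lt hy.2⟩
  have hj₁le : ∀ x ∈ Z, j₁ ≤ x := fun x hx => hj₁def ▸ csInf_le hBdd hx
  have hj₂le : ∀ x ∈ Z ∩ Set.Ioi j₁, j₂ ≤ x := fun x hx => hj₂def ▸ csInf_le hBdd2 hx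
  have hj₁j₂ : j₁ ≤ j₂ := hj₂def ▸ le_csInf hZ2ne (fun x hx => le_of_lt hx.2)
  -- the key fact: j₁ < j₂ (zeros of besselJ do not accumulate at j₁)
  have hjlt : j₁ < j₂ := by
    rcases lt_or_eq_of_le hj₁j₂ with h | h
    · exact h
    exfalso
    have hfreq : ∃ᶠ t in 𝓝[≠] ((j₁/2)^2 : ℝ),
        FormalMultilinearSeries.ofScalarsSum (E := ℝ)
          (fun s : ℕ => ((-1:ℝ)^s) / ((s.factorial : ℝ) * Real.Gamma (ν + (s:ℝ) + 1))) t
          = 0 := by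
      rw [Filter.frequently_iff]
      intro U hU
      rcases Metric.mem_nhdsWithin_iff.1 hU with ⟨ε, hε, hsub⟩
      set δ : ℝ := min 1 (2*ε/(2*j₁+1)) with hδ
      have h2j : (0:ℝ) < 2*j₁+1 := by linarith
      have hδ0 : 0 < δ := lt_min one_pos (by positivity)
      have hlt : sInf (Z ∩ Set.Ioi j₁) < j₁ + δ := by rw [← hj₂def, ← h]; linarith
      obtain ⟨x, hxmem, hxlt⟩ := (csInf_lt_iff hBdd2 hZ2ne).1 hlt
      have hxgt : j₁ < x := hxmem.2
      have hδ1 : δ ≤ 1 := min_le_left _ _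
      have hδ2 : δ ≤ 2*ε/(2*j₁+1) := min_le_right _ _
      have hδ2' : δ * (2*j₁+1) ≤ 2*ε := by
        rw [← le_div_iff₀ h2j]; exact hδ2
      refine ⟨(x/2)^2, hsub ⟨?_, ?_⟩, hZg x hxmem.1⟩
      · rw [Metric.mem_ball, Real.dist_eq]
        rw [abs_of_nonneg (by nlinarith)]
        nlinarith
      · simp only [Set.mem_compl_iff, Set.mem_singleton_iff]
        intro hcontra
        nlinarith [mul_pos (sub_pos.2 hxgt) (show (0:ℝ) < x + j₁ by linarith)]
    have hEq := (analyticOnNhd_g hνpos).eqOn_zero_of_preconnected_of_frequently_eq_zero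
      isPreconnected_univ (Set.mem_univ ((j₁/2)^2 : ℝ)) hfreq
    have h0 := hEq (Set.mem_univ (0:ℝ))
    rw [FormalMultilinearSeries.ofScalarsSum_zero] at h0
    have hΓ : 0 < Real.Gamma (ν + 1) := Real.Gamma_pos_of_pos (by linarith)
    norm_num at h0
    exact absurd h0 hΓ.ne'
  constructor
  · ext ⟨r, θ⟩
    simp only [Set.mem_setOf_eq]
    constructor
    · rintro ⟨hr0, hr1, hθ0, hθα, hmul⟩
      have hθπ : ν * θ < π := by
        have := mul_lt_mul_of_pos_left hθα hνpos
        linarith [hνα]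
      have hsin : 0 < Real.sin (ν * θ) :=
        Real.sin_pos_of_pos_of_lt_pi (mul_pos hνpos hθ0) hθπ
      have hbz : besselJ ν (j₂ * r) = 0 := by
        rcases mul_eq_zero.1 hmul with hh | hh
        · exact hh
        · exact absurd hh hsin.ne'
      have hxZ : j₂ * r ∈ Z := by rw [hZ]; exact ⟨mul_pos hj₂Zpos hr0, hbz⟩
      have hxlt : j₂ * r < j₂ := by nlinarith
      have hxge : j₁ ≤ j₂ * r := hj₁le _ hxZ
      have hxeq : j₂ * r = j₁ := by
        by_contra hne
        have h1 : j₁ < j₂ * r := lt_of_le_of_ne hxge (Ne.symm hne)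
        have := hj₂le _ ⟨hxZ, h1⟩
        linarith
      refine ⟨?_, hθ0, hθα⟩
      rw [eq_div_iff hj₂Zpos.ne']
      linear_combination hxeq
    · rintro ⟨hr, hθ0, hθα⟩
      have hr0 : 0 < r := hr ▸ div_pos hj₁pos hj₂Zpos
      have hr1 : r < 1 := hr ▸ (div_lt_one hj₂Zpos).2 hjlt
      have hjr : j₂ * r = j₁ := by rw [hr]; field_simp
      refine ⟨hr0, hr1, hθ0, hθα, ?_⟩
      have hj1z := hj₁mem
      rw [hZ] at hj1z
      rw [hjr, hj1z.2, zero_mul]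
  · ext ⟨r, θ⟩
    simp only [Set.mem_setOf_eq]
    constructor
    · rintro ⟨hr0, hr1, hθ0, hθα, hmul⟩
      have hi₁le : ∀ x ∈ W, i₁ ≤ x := fun x hx =>
        hi₁def ▸ csInf_le ⟨0, fun y hy => (hW ▸ hy).1.le⟩ hx
      have hbne : besselJ (2*ν) (i₁ * r) ≠ 0 := by
        intro hb
        have hmem : i₁ * r ∈ W := by rw [hW]; exact ⟨mul_pos hi₁pos hr0, hb⟩
        have := hi₁le _ hmem
        nlinarith
      have hsin : Real.sin (2*ν*θ) = 0 := by
        rcases mul_eq_zero.1 hmul with hh | hh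
        · exact absurd hh hbne
        · exact hh
      obtain ⟨n, hn⟩ := Real.sin_eq_zero_iff.1 hsin
      have hpos : (0:ℝ) < 2*ν*θ := by positivity
      have hupper : 2*ν*θ < 2*π := by nlinarith
      have hn0 : 0 < n := by
        have : (0:ℝ) < (n:ℝ) := by nlinarith [pi_pos]
        exact_mod_cast this
      have hn2 : n < 2 := by
        have : (n:ℝ) < 2 := by nlinarith [pi_pos]
        exact_mod_cast this
      have hn1 : n = 1 := by omega
      rw [hn1] at hn
      push_cast at hn
      refine ⟨hr0, hr1, ?_⟩
      have h3 : ν * (2*θ) = ν * α := by linear_combination -hn - hνα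
      have h4 : 2*θ = α := mul_left_cancel₀ hνpos.ne' h3
      linarith
    · rintro ⟨hr0, hr1, hθ⟩
      refine ⟨hr0, hr1, by rw [hθ]; linarith, by rw [hθ]; linarith, ?_⟩
      have hpi : 2*ν*(α/2) = π := by rw [← hνα]; ring
      rw [hθ, hpi, Real.sin_pi, mul_zero]
end

section
/- For every real z with 0 < z < 1, one has 1 < (1 − z)^{3/2} / (√(1 − z²) − z·arccos(z)) < (3/4)·√2; equivalently, (2√2/3)·(1 − z)^{3/2} < √(1 − z²) − z·arccos(z) < (1 − z)^{3/2}. -/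
open Real Set

/-! Since `η̃' = -arccos` and `η̃ 1 = 0`, both bounds follow by comparing derivatives.
The lower bound comes from `arccos t = 2 arcsin √((1 - t) / 2) > √2 · √(1 - t)`. For the upper
bound, `G = (1 - t)^{3/2} - η̃` vanishes at `0` and `1`, and `G' = arccos t - (3/2) √(1 - t)`
decreases on `[0, 7/9]` and then increases to `G' 1 = 0`; so `G'` changes sign once, from `+` to
`-`, and `G > 0` on `(0, 1)`. -/

theorem pos_of_hasDerivAt_of_sign_change {f f' : ℝ → ℝ} {a b : ℝ}
    (hf : ContinuousOn f (Icc a b)) (hf' : ∀ x ∈ Ioo a b, HasDerivAt f (f' x) x)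
    (ha : 0 ≤ f a) (hb : 0 ≤ f b)
    (hsign : ∀ x ∈ Ioo a b, ∀ y ∈ Ioo a b, x < y → 0 ≤ f' y → 0 < f' x)
    {z : ℝ} (hz : z ∈ Ioo a b) : 0 < f z := by
  by_cases hfz : 0 ≤ f' z
  · have hmono : StrictMonoOn f (Icc a z) := by
      refine strictMonoOn_of_deriv_pos (convex_Icc a z) (hf.mono (Icc_subset_Icc_right hz.2.le))
        fun x hx => ?_
      rw [interior_Icc] at hx
      have hxab : x ∈ Ioo a b := ⟨hx.1, hx.2.trans hz.2⟩
      rw [(hf' x hxab).deriv]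
      exact hsign x hxab z hz hx.2 hfz
    exact ha.trans_lt (hmono (left_mem_Icc.2 hz.1.le) (right_mem_Icc.2 hz.1.le) hz.1)
  · have hanti : StrictAntiOn f (Icc z b) := by
      refine strictAntiOn_of_deriv_neg (convex_Icc z b) (hf.mono (Icc_subset_Icc_left hz.1.le))
        fun x hx => ?_
      rw [interior_Icc] at hx
      have hxab : x ∈ Ioo a b := ⟨hz.1.trans hx.1, hx.2⟩
      rw [(hf' x hxab).deriv]
      by_contra! hx0
      exact hfz (hsign z hz x hxab hx.1 hx0).le
    exact hb.trans_lt (hanti (left_mem_Icc.2 hz.2.le) (right_mem_Icc.2 hz.2.le) hz.2)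

noncomputable def etaTilde (z : ℝ) : ℝ := √(1 - z ^ 2) - z * arccos z

lemma etaTilde_zero : etaTilde 0 = 1 := by simp [etaTilde]

lemma etaTilde_one : etaTilde 1 = 0 := by simp [etaTilde]

lemma continuous_etaTilde : Continuous etaTilde := by
  unfold etaTilde; fun_prop

lemma hasDerivAt_etaTilde {z : ℝ} (h1 : -1 < z) (h2 : z < 1) :
    HasDerivAt etaTilde (-arccos z) z := by
  have hpos : 0 < 1 - z ^ 2 := by nlinarith
  have hsqrt := (((hasDerivAt_pow 2 z).const_sub 1).sqrt hpos.ne')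
  have h := hsqrt.sub ((hasDerivAt_id' z).mul (hasDerivAt_arccos h1.ne' h2.ne))
  refine h.congr_deriv ?_
  have : 0 < √(1 - z ^ 2) := sqrt_pos.2 hpos
  field_simp
  ring

lemma hasDerivAt_one_sub_rpow_three_halves (z : ℝ) :
    HasDerivAt (fun t : ℝ => (1 - t) ^ ((3 : ℝ) / 2)) (-(3 / 2 * √(1 - z))) z := by
  have h := (hasDerivAt_rpow_const (x := 1 - z) (p := 3 / 2) (Or.inr (by norm_num))).comp z
    ((hasDerivAt_id z).const_sub 1)
  refine h.congr_deriv ?_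
  rw [show (3 : ℝ) / 2 - 1 = 1 / 2 by norm_num, ← sqrt_eq_rpow]
  ring

lemma continuous_one_sub_rpow_three_halves :
    Continuous fun t : ℝ => (1 - t) ^ ((3 : ℝ) / 2) :=
  continuous_iff_continuousAt.2 fun z => (hasDerivAt_one_sub_rpow_three_halves z).continuousAt

lemma sqrt_two_mul_sqrt_one_sub_lt_arccos {z : ℝ} (h1 : -1 ≤ z) (h2 : z < 1) :
    √2 * √(1 - z) < arccos z := by
  set θ := arccos z
  have hθ0 : 0 < θ := arccos_pos.2 h2
  have hsin : sin (θ / 2) = √((1 - z) / 2) := by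
    rw [sin_half_eq_sqrt hθ0.le (by linarith [arccos_le_pi z, pi_pos]), cos_arccos h1 h2.le]
  have hkey : √2 * √(1 - z) = 2 * sin (θ / 2) := by
    rw [hsin, ← sqrt_mul zero_le_two, show (2 : ℝ) * (1 - z) = 2 ^ 2 * ((1 - z) / 2) by ring,
      sqrt_mul (by norm_num), sqrt_sq zero_le_two]
  rw [hkey]
  linarith [sin_lt (half_pos hθ0)]

/-- The derivative of `(1 - t) ^ (3 / 2) - η̃ t`. -/
noncomputable def arccosSubSqrt (t : ℝ) : ℝ := arccos t - 3 / 2 * √(1 - t)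

lemma continuous_arccosSubSqrt : Continuous arccosSubSqrt := by
  unfold arccosSubSqrt; fun_prop

lemma arccosSubSqrt_one : arccosSubSqrt 1 = 0 := by simp [arccosSubSqrt]

lemma hasDerivAt_arccosSubSqrt {z : ℝ} (h1 : -1 < z) (h2 : z < 1) :
    HasDerivAt arccosSubSqrt (1 / √(1 - z) * (3 / 4 - 1 / √(1 + z))) z := by
  have hmz : 0 < 1 - z := by linarith
  have hpz : 0 < 1 + z := by linarith
  have h := (hasDerivAt_arccos h1.ne' h2.ne).sub
    ((((hasDerivAt_id' z).const_sub 1).sqrt hmz.ne').const_mul (3 / 2 : ℝ))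
  refine h.congr_deriv ?_
  have hfac : √(1 - z ^ 2) = √(1 - z) * √(1 + z) := by
    rw [← sqrt_mul hmz.le]; ring_nf
  have : 0 < √(1 - z) := sqrt_pos.2 hmz
  have : 0 < √(1 + z) := sqrt_pos.2 hpz
  rw [hfac]
  field_simp
  ring

lemma strictAntiOn_arccosSubSqrt : StrictAntiOn arccosSubSqrt (Icc 0 (7 / 9)) := by
  refine strictAntiOn_of_deriv_neg (convex_Icc _ _) continuous_arccosSubSqrt.continuousOn
    fun x hx => ?_
  rw [interior_Icc] at hx
  rw [(hasDerivAt_arccosSubSqrt (by linarith [hx.1]) (by linarith [hx.2])).deriv]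
  have h43 : √(1 + x) < 4 / 3 := by
    rw [sqrt_lt' (by norm_num)]; linarith [hx.2]
  have : 0 < √(1 + x) := sqrt_pos.2 (by linarith [hx.1])
  have : 0 < 1 / √(1 - x) := by have := sqrt_pos.2 (by linarith [hx.2] : 0 < 1 - x); positivity
  refine mul_neg_of_pos_of_neg this ?_
  rw [sub_neg, lt_div_iff₀ (by positivity)]
  linarith

lemma strictMonoOn_arccosSubSqrt : StrictMonoOn arccosSubSqrt (Icc (7 / 9) 1) := by
  refine strictMonoOn_of_deriv_pos (convex_Icc _ _) continuous_arccosSubSqrt.continuousOn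
    fun x hx => ?_
  rw [interior_Icc] at hx
  rw [(hasDerivAt_arccosSubSqrt (by linarith [hx.1]) hx.2).deriv]
  have h43 : 4 / 3 < √(1 + x) := by
    rw [lt_sqrt (by norm_num)]; linarith [hx.1]
  have : 0 < 1 / √(1 - x) := by have := sqrt_pos.2 (by linarith [hx.2] : 0 < 1 - x); positivity
  refine mul_pos this ?_
  rw [sub_pos, div_lt_iff₀ (by positivity)]
  linarith

lemma arccosSubSqrt_pos_of_lt {x y : ℝ} (hx : 0 ≤ x) (hxy : x < y) (hy : y < 1)
    (hy0 : 0 ≤ arccosSubSqrt y) : 0 < arccosSubSqrt x := by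
  have hy79 : y < 7 / 9 := by
    by_contra! h
    have := strictMonoOn_arccosSubSqrt ⟨h, hy.le⟩ ⟨by norm_num, le_rfl⟩ hy
    linarith [arccosSubSqrt_one]
  exact hy0.trans_lt (strictAntiOn_arccosSubSqrt ⟨hx, by linarith⟩ ⟨by linarith, hy79.le⟩ hxy)

lemma etaTilde_lt_one_sub_rpow_three_halves {z : ℝ} (hz0 : 0 < z) (hz1 : z < 1) :
    etaTilde z < (1 - z) ^ ((3 : ℝ) / 2) := by
  have h := pos_of_hasDerivAt_of_sign_change (f := fun t => (1 - t) ^ ((3 : ℝ) / 2) - etaTilde t)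
    (continuous_one_sub_rpow_three_halves.sub continuous_etaTilde).continuousOn
    (fun x hx => ((hasDerivAt_one_sub_rpow_three_halves x).sub
      (hasDerivAt_etaTilde (by linarith [hx.1]) hx.2)).congr_deriv
        (by simp only [arccosSubSqrt]; ring))
    (by simp [etaTilde_zero]) (by simp [etaTilde_one])
    (fun x hx y hy hxy => arccosSubSqrt_pos_of_lt hx.1.le hxy hy.2) ⟨hz0, hz1⟩
  exact sub_pos.1 h

lemma two_mul_sqrt_two_div_three_mul_lt_etaTilde {z : ℝ} (hz : -1 ≤ z) (hz1 : z < 1) :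
    2 * √2 / 3 * (1 - z) ^ ((3 : ℝ) / 2) < etaTilde z := by
  set F := fun t => etaTilde t - 2 * √2 / 3 * (1 - t) ^ ((3 : ℝ) / 2)
  have hanti : StrictAntiOn F (Icc z 1) := by
    have hcont : Continuous F :=
      continuous_etaTilde.sub (continuous_const.mul continuous_one_sub_rpow_three_halves)
    refine strictAntiOn_of_deriv_neg (convex_Icc z 1) hcont.continuousOn fun x hx => ?_
    rw [interior_Icc] at hx
    have hF : HasDerivAt F (-arccos x - 2 * √2 / 3 * -(3 / 2 * √(1 - x))) x :=
      (hasDerivAt_etaTilde (by linarith [hx.1]) hx.2).sub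
        ((hasDerivAt_one_sub_rpow_three_halves x).const_mul (2 * √2 / 3))
    rw [hF.deriv]
    linarith [sqrt_two_mul_sqrt_one_sub_lt_arccos (by linarith [hx.1]) hx.2]
  have := hanti (left_mem_Icc.2 hz1.le) (right_mem_Icc.2 hz1.le) hz1
  simpa [F, etaTilde_one] using this

/-- Two-sided bound on the phase function `η̃(z) = √(1-z²) - z·arccos z`:
for `0 < z < 1`, `1 < (1-z)^{3/2} / η̃(z) < (3/4)√2`, equivalently
`(2√2/3)(1-z)^{3/2} < η̃(z) < (1-z)^{3/2}`. -/
theorem eta_tilde_bounds (z : ℝ) (hz0 : 0 < z) (hz1 : z < 1) :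
    (1 < (1 - z) ^ ((3 : ℝ) / 2) / (Real.sqrt (1 - z ^ 2) - z * Real.arccos z) ∧
      (1 - z) ^ ((3 : ℝ) / 2) / (Real.sqrt (1 - z ^ 2) - z * Real.arccos z)
        < (3 / 4) * Real.sqrt 2) ∧
    ((2 * Real.sqrt 2 / 3) * (1 - z) ^ ((3 : ℝ) / 2)
        < Real.sqrt (1 - z ^ 2) - z * Real.arccos z ∧
      Real.sqrt (1 - z ^ 2) - z * Real.arccos z < (1 - z) ^ ((3 : ℝ) / 2)) := by
  have hlow := two_mul_sqrt_two_div_three_mul_lt_etaTilde (by linarith) hz1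
  have hup := etaTilde_lt_one_sub_rpow_three_halves hz0 hz1
  have hpow : 0 < (1 - z) ^ ((3 : ℝ) / 2) := rpow_pos_of_pos (sub_pos.2 hz1) _
  have hη : 0 < etaTilde z := lt_trans (by positivity) hlow
  refine ⟨⟨(one_lt_div hη).2 hup, (div_lt_iff₀ hη).2 ?_⟩, hlow, hup⟩
  have hconst : 3 / 4 * √2 * (2 * √2 / 3) = 1 := by
    linear_combination (1 / 2 : ℝ) * mul_self_sqrt (zero_le_two (α := ℝ))
  calc (1 - z) ^ ((3 : ℝ) / 2)
      = 3 / 4 * √2 * (2 * √2 / 3 * (1 - z) ^ ((3 : ℝ) / 2)) := by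
        rw [← mul_assoc, hconst, one_mul]
    _ < 3 / 4 * √2 * etaTilde z := by gcongr
end

section
/- Let x > 0 and n be real numbers with 0 < n < x − ((3√2)/4)^{2/3}·x^{1/3}. Then η(x,n) := √(x² − n²) − n·arccos(n/x) satisfies η(x,n) > 1. -/
open Real

/-- The phase function `η(k,ν) = √(k²-ν²) - ν·arccos(ν/k)`. -/
noncomputable def eta (k ν : ℝ) : ℝ :=
  Real.sqrt (k ^ 2 - ν ^ 2) - ν * Real.arccos (ν / k)

/-!
Since `η(1,·)` has derivative `-arccos`, and `arccos t ≥ √(2(1-t))` (from `cos θ ≥ 1 - θ²/2`),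
integrating from `t` to `1` gives `η(1,t) ≥ (2√2/3)(1-t)^{3/2}`. The scaling
`η(k,ν) = k·η(1,ν/k)` turns this into `η(x,n) ≥ (2√2/3)(x-n)^{3/2}/√x`, and the hypothesis on `n`
says exactly that `(x-n)^{3/2} > (3√2/4)√x`, where `(2√2/3)(3√2/4) = 1`.
-/

lemma eta_one_apply (t : ℝ) : eta 1 t = √(1 - t ^ 2) - t * arccos t := by
  simp [eta]

lemma eta_self (k : ℝ) : eta k k = 0 := by
  rcases eq_or_ne k 0 with rfl | hk <;> simp [eta, *]

lemma eta_eq_mul_eta_one {k : ℝ} (hk : 0 < k) (ν : ℝ) : eta k ν = k * eta 1 (ν / k) := by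
  have hsq : k ^ 2 - ν ^ 2 = k ^ 2 * (1 - (ν / k) ^ 2) := by field_simp
  rw [eta, eta_one_apply, hsq, sqrt_mul (sq_nonneg k), sqrt_sq hk.le]
  field_simp

lemma continuous_eta_one : Continuous (eta 1) := by
  rw [show eta 1 = fun s => √(1 - s ^ 2) - s * arccos s from funext eta_one_apply]
  fun_prop

lemma hasDerivAt_eta_one {t : ℝ} (h₁ : -1 < t) (h₂ : t < 1) :
    HasDerivAt (eta 1) (-arccos t) t := by
  have hpos : 0 < 1 - t ^ 2 := by nlinarith
  have hroot : HasDerivAt (fun s => √(1 - s ^ 2)) (-(2 * t) / (2 * √(1 - t ^ 2))) t := by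
    simpa using ((hasDerivAt_pow 2 t).const_sub 1).sqrt hpos.ne'
  have harc := (hasDerivAt_id t).mul (hasDerivAt_arccos h₁.ne' h₂.ne)
  rw [show eta 1 = fun s => √(1 - s ^ 2) - s * arccos s from funext eta_one_apply]
  refine (hroot.sub harc).congr_deriv ?_
  have : √(1 - t ^ 2) ≠ 0 := (sqrt_pos.2 hpos).ne'
  simp only [id]
  field_simp
  ring

lemma sqrt_two_mul_sqrt_one_sub_le_arccos {t : ℝ} (h₁ : -1 ≤ t) (h₂ : t ≤ 1) :
    √2 * √(1 - t) ≤ arccos t := by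
  have hcos : 1 - arccos t ^ 2 / 2 ≤ t := by
    simpa only [cos_arccos h₁ h₂] using one_sub_sq_div_two_le_cos (x := arccos t)
  calc √2 * √(1 - t) = √(2 * (1 - t)) := (sqrt_mul zero_le_two _).symm
    _ ≤ √(arccos t ^ 2) := sqrt_le_sqrt (by linarith)
    _ = arccos t := sqrt_sq (arccos_nonneg t)

lemma two_sqrt_two_div_three_mul_rpow_le_eta_one {t : ℝ} (h₁ : -1 ≤ t) (h₂ : t ≤ 1) :
    2 * √2 / 3 * (1 - t) ^ (3 / 2 : ℝ) ≤ eta 1 t := by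
  set g : ℝ → ℝ := fun s => eta 1 s - 2 * √2 / 3 * (1 - s) ^ (3 / 2 : ℝ)
  have hderiv : ∀ s ∈ interior (Set.Icc (-1 : ℝ) 1),
      HasDerivAt g (√2 * √(1 - s) - arccos s) s := by
    rw [interior_Icc]
    rintro s ⟨hs₁, hs₂⟩
    have hpow := ((hasDerivAt_id s).const_sub 1).rpow_const (p := 3 / 2) (Or.inr (by norm_num))
    refine ((hasDerivAt_eta_one hs₁ hs₂).sub (hpow.const_mul (2 * √2 / 3))).congr_deriv ?_
    rw [id, sqrt_eq_rpow, sqrt_eq_rpow, show (3 / 2 : ℝ) - 1 = 1 / 2 by norm_num]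
    ring
  have hanti : AntitoneOn g (Set.Icc (-1) 1) := by
    refine antitoneOn_of_hasDerivWithinAt_nonpos (convex_Icc _ _) ?_
      (fun s hs => (hderiv s hs).hasDerivWithinAt) fun s hs => ?_
    · exact (continuous_eta_one.sub (by fun_prop (disch := norm_num))).continuousOn
    · rw [interior_Icc] at hs
      linarith [sqrt_two_mul_sqrt_one_sub_le_arccos hs.1.le hs.2.le]
  have hg : g 1 ≤ g t := hanti ⟨h₁, h₂⟩ ⟨by norm_num, le_rfl⟩ h₂
  simpa [g, eta_self] using hg

lemma two_sqrt_two_div_three_mul_rpow_div_sqrt_le_eta {k ν : ℝ} (hk : 0 < k) (h₁ : -k ≤ ν)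
    (h₂ : ν ≤ k) : 2 * √2 / 3 * (k - ν) ^ (3 / 2 : ℝ) / √k ≤ eta k ν := by
  have hbound := two_sqrt_two_div_three_mul_rpow_le_eta_one (t := ν / k)
    ((le_div_iff₀ hk).2 (by linarith)) ((div_le_one hk).2 h₂)
  have hscale : k * (1 - ν / k) ^ (3 / 2 : ℝ) = (k - ν) ^ (3 / 2 : ℝ) / √k := by
    rw [one_sub_div hk.ne', div_rpow (by linarith) hk.le, show (3 / 2 : ℝ) = 1 + 1 / 2 by norm_num,
      rpow_add hk, rpow_one, ← sqrt_eq_rpow]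
    field_simp
  rw [eta_eq_mul_eta_one hk, mul_div_assoc, ← hscale, mul_left_comm]
  exact mul_le_mul_of_nonneg_left hbound hk.le

/-- If `0 < n < x - ((3√2)/4)^{2/3} x^{1/3}` then `η(x,n) > 1`. -/
theorem eta_gt_one (x n : ℝ) (hx : 0 < x) (hn : 0 < n)
    (h : n < x - ((3 * Real.sqrt 2) / 4) ^ ((2 : ℝ) / 3) * x ^ ((1 : ℝ) / 3)) :
    1 < eta x n := by
  have hc₀ : 0 < 3 * √2 / 4 := by positivity
  have hgap : (3 * √2 / 4) * √x < (x - n) ^ (3 / 2 : ℝ) :=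
    calc (3 * √2 / 4) * √x
        = ((3 * √2 / 4) ^ (2 / 3 : ℝ) * x ^ (1 / 3 : ℝ)) ^ (3 / 2 : ℝ) := by
          rw [mul_rpow (by positivity) (by positivity), ← rpow_mul hc₀.le, ← rpow_mul hx.le,
            sqrt_eq_rpow x]
          norm_num
      _ < (x - n) ^ (3 / 2 : ℝ) := rpow_lt_rpow (by positivity) (by linarith) (by norm_num)
  have hsx : 0 < √x := sqrt_pos.2 hx
  have hnx : n ≤ x := by
    have : 0 < (3 * √2 / 4) ^ (2 / 3 : ℝ) * x ^ (1 / 3 : ℝ) := by positivity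
    linarith
  calc 1 = 2 * √2 / 3 * ((3 * √2 / 4) * √x) / √x := by
          field_simp
          norm_num
    _ < 2 * √2 / 3 * (x - n) ^ (3 / 2 : ℝ) / √x := by gcongr
    _ ≤ eta x n := two_sqrt_two_div_three_mul_rpow_div_sqrt_le_eta hx (by linarith) hnx
end

section
/- For every real order ν ≥ 0 and every real x > 0, writing a = #{t ∈ (0,x) : J_ν(t) = 0} and b = #{t ∈ (0,x) : J_{ν+1}(t) = 0} (both sets being finite), one has b ≤ a ≤ b + 1; that is, a − b ∈ {0, 1}. -/
/-!
Write `J_ν(x) = (x/2)^ν g_ν((x/2)^2)` with the entire function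
`g_ν(u) = ∑ (-u)^s / (s! Γ(ν+s+1))`. Termwise, `g_ν' = -g_{ν+1}`, and with the recurrence
`g_ν = (ν+1) g_{ν+1} - u g_{ν+2}` also `(u^{ν+1} g_{ν+1})' = u^ν g_ν`. So by Rolle a zero of
`g_{ν+1}` lies strictly between two zeros of `g_ν`, and a zero of `g_ν` lies between two zeros of
`g_{ν+1}` and between `0` and the first one; this gives `a ≤ b + 1` and `b + 1 ≤ a + 1`.
The zeros in `u > 0` are simple, hence isolated and finite in number: a common zero of `g_ν` and
`g_{ν+1}` would, by the recurrence, be a zero of every `g_{ν+k}`, while `g_{ν+k}(u) > 0` as soon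
as `3u ≤ ν+k+1`.
-/

open Real

open Set Filter
open scoped Nat

def SeparatedBy {α : Type*} [LinearOrder α] (S T : Set α) : Prop :=
  ∀ a ∈ S, ∀ b ∈ S, a < b → (Ioo a b ∩ T).Nonempty

theorem Finset.card_le_card_add_one_of_separatedBy {α : Type*} [LinearOrder α]
    {S T : Finset α} (h : SeparatedBy (S : Set α) T) : S.card ≤ T.card + 1 := by
  classical
  induction S using Finset.induction_on_max generalizing T with
  | empty => simp
  | insert a s hlt ih =>
    rcases s.eq_empty_or_nonempty with rfl | hs
    · simp
    obtain ⟨t, ⟨hbt, hta⟩, htT⟩ :=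
      h _ (by simp [s.max'_mem hs]) a (by simp) (hlt _ (s.max'_mem hs))
    have hsT : SeparatedBy (s : Set α) (T.erase t) := by
      intro x hx y hy hxy
      obtain ⟨t', ht', ht'T⟩ := h x (by simp [hx]) y (by simp [hy]) hxy
      exact ⟨t', ht', Finset.mem_erase.2
        ⟨((ht'.2.trans_le (s.le_max' y hy)).trans hbt).ne, ht'T⟩⟩
    have hs_card := ih hsT
    rw [card_erase_of_mem htT] at hs_card
    rw [card_insert_of_notMem fun has => (hlt a has).false]
    have hT_pos := card_pos.2 ⟨t, htT⟩
    omega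

theorem SeparatedBy.ncard_le_ncard_add_one {α : Type*} [LinearOrder α] {S T : Set α}
    (h : SeparatedBy S T) (hS : S.Finite) (hT : T.Finite) : S.ncard ≤ T.ncard + 1 := by
  lift S to Finset α using hS
  lift T to Finset α using hT
  simpa using Finset.card_le_card_add_one_of_separatedBy h

theorem IsCompact.finite_zeros_of_hasDerivAt_ne_zero {s : Set ℝ} (hs : IsCompact s)
    {f : ℝ → ℝ} (hf : Continuous f)
    (hf' : ∀ x ∈ s, f x = 0 → ∃ f', HasDerivAt f f' x ∧ f' ≠ 0) :
    {x | x ∈ s ∧ f x = 0}.Finite := by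
  refine (hs.inter_right (isClosed_eq hf continuous_const)).finite ?_
  rw [isDiscrete_iff_nhdsNE]
  rintro x ⟨hxs, hx⟩
  obtain ⟨f', hd, hne⟩ := hf' x hxs hx
  rw [inf_principal_eq_bot]
  filter_upwards [hd.eventually_ne hne (c := 0)] with y hy hmem using hy hmem.2

theorem Real.Gamma_mul_pow_le_Gamma_add_nat {a : ℝ} (ha : 0 < a) (s : ℕ) :
    a ^ s * Gamma a ≤ Gamma (a + s) := by
  induction s with
  | zero => simp
  | succ n ih =>
    rw [Nat.cast_succ, ← add_assoc, Gamma_add_one (by positivity : a + n ≠ 0), pow_succ]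
    calc a ^ n * a * Gamma a = a * (a ^ n * Gamma a) := by ring
      _ ≤ (a + n) * Gamma (a + n) := by
        gcongr
        exact le_add_of_nonneg_right n.cast_nonneg

noncomputable def besselTerm (c u : ℝ) (s : ℕ) : ℝ :=
  (-u) ^ s / (s ! * Gamma (c + s + 1))

noncomputable def besselG (c u : ℝ) : ℝ :=
  ∑' s, besselTerm c u s

theorem besselTerm_zero_right (c u : ℝ) : besselTerm c u 0 = (Gamma (c + 1))⁻¹ := by
  simp [besselTerm]

theorem hasDerivAt_besselTerm_succ (c u : ℝ) (s : ℕ) :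
    HasDerivAt (fun u => besselTerm c u (s + 1)) (-besselTerm (c + 1) u s) u := by
  refine (((hasDerivAt_id u).neg.pow (s + 1)).div_const
    ((s + 1) ! * Gamma (c + (s + 1 : ℕ) + 1))).congr_deriv ?_
  rw [show c + ((s + 1 : ℕ) : ℝ) + 1 = c + 1 + s + 1 by push_cast; ring]
  simp only [besselTerm, Nat.factorial_succ, Pi.neg_apply, id_eq, add_tsub_cancel_right]
  push_cast
  field_simp

section besselG

variable {c : ℝ}

theorem abs_besselTerm_le (hc : 0 ≤ c) (u : ℝ) (s : ℕ) :
    |besselTerm c u s| ≤ |u| ^ s / (s ! * ((c + 1) ^ s * Gamma (c + 1))) := by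
  have hΓ : (c + 1) ^ s * Gamma (c + 1) ≤ Gamma (c + s + 1) := by
    simpa only [add_right_comm] using Gamma_mul_pow_le_Gamma_add_nat (by linarith : 0 < c + 1) s
  have hpos : 0 < (c + 1) ^ s * Gamma (c + 1) :=
    mul_pos (by positivity) (Gamma_pos_of_pos (by linarith))
  rw [besselTerm, abs_div, abs_pow, abs_neg,
    abs_of_pos (mul_pos (by positivity) (hpos.trans_le hΓ))]
  gcongr

theorem abs_besselTerm_le_factorial (hc : 0 ≤ c) (u : ℝ) (s : ℕ) :
    |besselTerm c u s| ≤ |u| ^ s / s ! / Gamma (c + 1) := by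
  refine (abs_besselTerm_le hc u s).trans ?_
  rw [div_div]
  gcongr
  exact le_mul_of_one_le_left (Gamma_pos_of_pos (by linarith)).le (one_le_pow₀ (by linarith))

theorem summable_besselTerm (hc : 0 ≤ c) (u : ℝ) : Summable (besselTerm c u) :=
  .of_norm_bounded ((summable_pow_div_factorial |u|).div_const _)
    (abs_besselTerm_le_factorial hc u)

theorem besselG_eq_add_tsum (hc : 0 ≤ c) (u : ℝ) :
    besselG c u = (Gamma (c + 1))⁻¹ + ∑' s, besselTerm c u (s + 1) := by
  rw [besselG, (summable_besselTerm hc u).tsum_eq_zero_add, besselTerm_zero_right]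

theorem hasDerivAt_besselG (hc : 0 ≤ c) (u : ℝ) :
    HasDerivAt (besselG c) (-besselG (c + 1) u) u := by
  have hu : u ∈ Ioo (-(|u| + 1)) (|u| + 1) := by
    constructor <;> linarith [neg_abs_le u, le_abs_self u]
  have hsum := hasDerivAt_tsum_of_isPreconnected
    (u := fun s => (|u| + 1) ^ s / s ! / Gamma (c + 1 + 1))
    ((summable_pow_div_factorial _).div_const _) isOpen_Ioo isPreconnected_Ioo
    (fun s v _ => hasDerivAt_besselTerm_succ c v s)
    (fun s v hv => by
      rw [norm_neg, Real.norm_eq_abs]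
      refine (abs_besselTerm_le_factorial (by linarith) v s).trans ?_
      gcongr
      exact abs_le.2 ⟨hv.1.le, hv.2.le⟩)
    hu ((summable_nat_add_iff 1).2 (summable_besselTerm hc u)) hu
  rw [tsum_neg] at hsum
  rw [show besselG c = fun v => (Gamma (c + 1))⁻¹ + ∑' s, besselTerm c v (s + 1) from
    funext (besselG_eq_add_tsum hc)]
  exact hsum.const_add _

theorem continuous_besselG (hc : 0 ≤ c) : Continuous (besselG c) :=
  continuous_iff_continuousAt.2 fun u => (hasDerivAt_besselG hc u).continuousAt

theorem besselG_eq_sub (hc : 0 ≤ c) (u : ℝ) :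
    besselG c u = (c + 1) * besselG (c + 1) u - u * besselG (c + 2) u := by
  set d := fun s => (c + 1) * besselTerm (c + 1) u s - besselTerm c u s
  have hd : Summable d :=
    ((summable_besselTerm (by linarith) u).mul_left _).sub (summable_besselTerm hc u)
  have hd0 : d 0 = 0 := by
    simp only [d, besselTerm_zero_right, Gamma_add_one (by linarith : c + 1 ≠ 0), mul_inv,
      ← mul_assoc, mul_inv_cancel₀ (by linarith : c + 1 ≠ 0), one_mul, sub_self]
  have hd_succ (s : ℕ) : d (s + 1) = u * besselTerm (c + 2) u s := by
    have hpos : 0 < c + s + 2 := by positivity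
    have h1 : Gamma (c + 1 + (s + 1 : ℕ) + 1) = (c + s + 2) * Gamma (c + s + 2) := by
      rw [← Gamma_add_one hpos.ne']; congr 1; push_cast; ring
    have h2 : Gamma (c + 2 + s + 1) = (c + s + 2) * Gamma (c + s + 2) := by
      rw [← Gamma_add_one hpos.ne']; congr 1; ring
    have h3 : Gamma (c + (s + 1 : ℕ) + 1) = Gamma (c + s + 2) := by congr 1; push_cast; ring
    have hΓ := Gamma_pos_of_pos hpos
    simp only [d, besselTerm, h1, h2, h3, Nat.factorial_succ]
    push_cast
    field_simp
    ring
  have hsum : ∑' s, d s = u * besselG (c + 2) u := by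
    rw [hd.tsum_eq_zero_add, hd0, zero_add, tsum_congr hd_succ, tsum_mul_left, besselG]
  rw [Summable.tsum_sub ((summable_besselTerm (by linarith) u).mul_left _)
    (summable_besselTerm hc u), tsum_mul_left] at hsum
  unfold besselG at hsum ⊢
  linarith

theorem besselG_pos (hc : 0 ≤ c) {u : ℝ} (hu : 0 ≤ u) (h : 3 * u ≤ c + 1) :
    0 < besselG c u := by
  have hΓ := Gamma_pos_of_pos (by linarith : 0 < c + 1)
  set q := u / (c + 1)
  have hq : q ≤ 1 / 3 := by rw [div_le_iff₀ (by linarith)]; linarith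
  have hbound (s : ℕ) : |besselTerm c u s| ≤ q ^ s / Gamma (c + 1) := by
    refine (abs_besselTerm_le hc u s).trans ?_
    rw [abs_of_nonneg hu, div_pow, div_div]
    exact div_le_div_of_nonneg_left (by positivity) (by positivity)
      (le_mul_of_one_le_left (by positivity) (Nat.one_le_cast.2 s.factorial_pos))
  have hsum := summable_besselTerm hc u
  have hgeom : Summable fun s => q ^ s / Gamma (c + 1) :=
    (summable_geometric_of_lt_one (by positivity) (by linarith)).div_const _
  -- `∑ aₛ ≥ 2 a₀ - ∑ |aₛ|` and `∑ |aₛ| ≤ a₀ ∑ qˢ ≤ 3/2 a₀`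
  have hlower : 2 / Gamma (c + 1) ≤ ∑' s, (besselTerm c u s + |besselTerm c u s|) := by
    have h0 := (hsum.add hsum.abs).le_tsum 0 fun s _ => neg_le_iff_add_nonneg.1 (neg_abs_le _)
    rw [besselTerm_zero_right, abs_of_pos (inv_pos.2 hΓ)] at h0
    rwa [← two_mul, ← div_eq_mul_inv] at h0
  have hupper : ∑' s, |besselTerm c u s| ≤ 3 / 2 / Gamma (c + 1) := by
    calc ∑' s, |besselTerm c u s| ≤ ∑' s, q ^ s / Gamma (c + 1) :=
          hsum.abs.tsum_le_tsum hbound hgeom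
      _ = (1 - q)⁻¹ / Gamma (c + 1) := by
          rw [tsum_div_const, tsum_geometric_of_lt_one (by positivity) (by linarith)]
      _ ≤ 3 / 2 / Gamma (c + 1) := by
          gcongr
          rw [inv_le_comm₀ (by linarith) (by norm_num)]
          linarith
  rw [Summable.tsum_add hsum hsum.abs] at hlower
  have : 0 < 2 / Gamma (c + 1) - 3 / 2 / Gamma (c + 1) := by
    rw [← sub_div]; exact div_pos (by norm_num) hΓ
  rw [besselG]
  linarith

theorem besselG_succ_ne_zero (hc : 0 ≤ c) {u : ℝ} (hu : 0 < u) (h : besselG c u = 0) :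
    besselG (c + 1) u ≠ 0 := by
  intro h'
  have hzero (k : ℕ) : besselG (c + k) u = 0 ∧ besselG (c + k + 1) u = 0 := by
    induction k with
    | zero => simpa using ⟨h, h'⟩
    | succ k ih =>
      have hrec := besselG_eq_sub (by positivity : 0 ≤ c + k) u
      rw [ih.1, ih.2, mul_zero, zero_sub, zero_eq_neg, mul_eq_zero] at hrec
      refine ⟨by simpa [add_assoc] using ih.2, ?_⟩
      convert hrec.resolve_left hu.ne' using 2
      push_cast
      ring
  refine (besselG_pos (c := c + ⌈3 * u⌉₊) (by positivity) hu.le ?_).ne' (hzero _).1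
  linarith [Nat.le_ceil (3 * u)]

theorem besselG_zero_right (c : ℝ) : besselG c 0 = (Gamma (c + 1))⁻¹ := by
  rw [besselG, tsum_eq_single 0 fun s hs => by simp [besselTerm, hs], besselTerm_zero_right]

theorem hasDerivAt_rpow_mul_besselG (hc : 0 ≤ c) {u : ℝ} (hu : 0 < u) :
    HasDerivAt (fun v => v ^ (c + 1) * besselG (c + 1) v) (u ^ c * besselG c u) u := by
  refine ((hasDerivAt_rpow_const (p := c + 1) (Or.inl hu.ne')).mul
    (hasDerivAt_besselG (by linarith) u)).congr_deriv ?_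
  rw [besselG_eq_sub hc u, add_sub_cancel_right, rpow_add_one hu.ne', add_assoc,
    one_add_one_eq_two]
  ring

theorem continuous_rpow_mul_besselG (hc : 0 ≤ c) :
    Continuous fun v => v ^ (c + 1) * besselG (c + 1) v :=
  (continuous_rpow_const (by linarith)).mul (continuous_besselG (by linarith))

def besselGZeros (c r : ℝ) : Set ℝ :=
  {u | u ∈ Ioo 0 r ∧ besselG c u = 0}

theorem finite_besselGZeros (hc : 0 ≤ c) (r : ℝ) : (besselGZeros c r).Finite := by
  refine ((isCompact_Icc (a := 0) (b := r)).finite_zeros_of_hasDerivAt_ne_zero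
    (continuous_besselG hc) ?_).subset fun u hu => ⟨Ioo_subset_Icc_self hu.1, hu.2⟩
  rintro u ⟨hu0, -⟩ hu
  have hpos : 0 < u := hu0.lt_of_ne <| by
    rintro rfl
    rw [besselG_zero_right] at hu
    exact (inv_pos.2 (Gamma_pos_of_pos (by linarith))).ne' hu
  exact ⟨_, hasDerivAt_besselG hc u, neg_ne_zero.2 (besselG_succ_ne_zero hc hpos hu)⟩

theorem separatedBy_besselGZeros_succ (hc : 0 ≤ c) (r : ℝ) :
    SeparatedBy (besselGZeros c r) (besselGZeros (c + 1) r) := by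
  rintro a ⟨ha, hza⟩ b ⟨hb, hzb⟩ hab
  obtain ⟨ξ, hξ, hd⟩ := exists_hasDerivAt_eq_zero hab (continuous_besselG hc).continuousOn
    (hza.trans hzb.symm) fun u _ => hasDerivAt_besselG hc u
  exact ⟨ξ, hξ, ⟨ha.1.trans hξ.1, hξ.2.trans hb.2⟩, neg_eq_zero.1 hd⟩

theorem separatedBy_insert_zero_besselGZeros (hc : 0 ≤ c) (r : ℝ) :
    SeparatedBy (insert 0 (besselGZeros (c + 1) r)) (besselGZeros c r) := by
  have hzero : ∀ a ∈ insert 0 (besselGZeros (c + 1) r),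
      0 ≤ a ∧ a ^ (c + 1) * besselG (c + 1) a = 0 := by
    rintro a (rfl | ⟨ha, hza⟩)
    · exact ⟨le_rfl, by rw [zero_rpow (by linarith), zero_mul]⟩
    · exact ⟨ha.1.le, by rw [hza, mul_zero]⟩
  intro a ha b hb hab
  obtain ⟨ha0, hKa⟩ := hzero a ha
  have hbr : b < r := by
    rcases hb with rfl | hb
    · exact absurd hab ha0.not_gt
    · exact hb.1.2
  obtain ⟨ξ, hξ, hd⟩ := exists_hasDerivAt_eq_zero hab
    (continuous_rpow_mul_besselG hc).continuousOn (hKa.trans (hzero b hb).2.symm)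
    fun u hu => hasDerivAt_rpow_mul_besselG hc (ha0.trans_lt hu.1)
  have hξ0 : 0 < ξ := ha0.trans_lt hξ.1
  exact ⟨ξ, hξ, ⟨hξ0, hξ.2.trans hbr⟩,
    (mul_eq_zero_iff_left (rpow_pos_of_pos hξ0 c).ne').1 hd⟩

end besselG

theorem besselJ_eq_rpow_mul_besselG (ν : ℝ) {x : ℝ} (hx : 0 < x) :
    besselJ ν x = (x / 2) ^ ν * besselG ν ((x / 2) ^ 2) := by
  rw [besselJ, besselG, ← tsum_mul_left]
  refine tsum_congr fun s => ?_
  rw [rpow_add (by positivity), show 2 * (s : ℝ) = ((2 * s : ℕ) : ℝ) by push_cast; ring,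
    rpow_natCast, pow_mul, besselTerm, neg_pow ((x / 2) ^ 2)]
  ring

theorem besselJ_zeros_eq_image (ν : ℝ) {x : ℝ} (hx : 0 < x) :
    {t : ℝ | t ∈ Ioo 0 x ∧ besselJ ν t = 0} =
      (fun u => 2 * √u) '' besselGZeros ν ((x / 2) ^ 2) := by
  have hJ {t : ℝ} (ht : 0 < t) : besselJ ν t = 0 ↔ besselG ν ((t / 2) ^ 2) = 0 := by
    rw [besselJ_eq_rpow_mul_besselG ν ht,
      mul_eq_zero_iff_left (rpow_pos_of_pos (by positivity) ν).ne']
  ext t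
  constructor
  · rintro ⟨⟨ht0, htx⟩, ht⟩
    refine ⟨(t / 2) ^ 2, ⟨⟨by positivity, pow_lt_pow_left₀ (by linarith) (by linarith)
      two_ne_zero⟩, (hJ ht0).1 ht⟩, ?_⟩
    simp only [sqrt_sq (by linarith : 0 ≤ t / 2)]
    ring
  · rintro ⟨u, ⟨⟨hu0, hur⟩, hu⟩, rfl⟩
    have hsq : √u < x / 2 := (sqrt_lt' (by positivity)).2 hur
    refine ⟨⟨by positivity, by linarith⟩, (hJ (by positivity)).2 ?_⟩
    rwa [mul_div_cancel_left₀ _ two_ne_zero, sq_sqrt hu0.le]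

/-- Interlacing of zero counts for consecutive orders: with
`a = #{t ∈ (0,x) : J_ν(t) = 0}` and `b = #{t ∈ (0,x) : J_{ν+1}(t) = 0}`,
one has `b ≤ a ≤ b + 1`. -/
theorem bessel_zero_count_consecutive (ν : ℝ) (hν : 0 ≤ ν) (x : ℝ) (hx : 0 < x) :
    {t : ℝ | t ∈ Set.Ioo 0 x ∧ besselJ ν t = 0}.Finite ∧
    {t : ℝ | t ∈ Set.Ioo 0 x ∧ besselJ (ν + 1) t = 0}.Finite ∧
    {t : ℝ | t ∈ Set.Ioo 0 x ∧ besselJ (ν + 1) t = 0}.ncard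
      ≤ {t : ℝ | t ∈ Set.Ioo 0 x ∧ besselJ ν t = 0}.ncard ∧
    {t : ℝ | t ∈ Set.Ioo 0 x ∧ besselJ ν t = 0}.ncard
      ≤ {t : ℝ | t ∈ Set.Ioo 0 x ∧ besselJ (ν + 1) t = 0}.ncard + 1 := by
  have hinj (c : ℝ) : InjOn (fun u => 2 * √u) (besselGZeros c ((x / 2) ^ 2)) :=
    fun u hu v hv huv => (sqrt_inj hu.1.1.le hv.1.1.le).1 (mul_left_cancel₀ two_ne_zero huv)
  rw [besselJ_zeros_eq_image ν hx, besselJ_zeros_eq_image (ν + 1) hx, (hinj ν).ncard_image,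
    (hinj (ν + 1)).ncard_image]
  have hA := finite_besselGZeros hν ((x / 2) ^ 2)
  have hB := finite_besselGZeros (by linarith : 0 ≤ ν + 1) ((x / 2) ^ 2)
  refine ⟨hA.image _, hB.image _, ?_,
    (separatedBy_besselGZeros_succ hν _).ncard_le_ncard_add_one hA hB⟩
  have h := (separatedBy_insert_zero_besselGZeros hν _).ncard_le_ncard_add_one (hB.insert 0) hA
  rwa [ncard_insert_of_notMem (fun h0 => lt_irrefl 0 h0.1.1) hB, add_le_add_iff_right] at h
end
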